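/- arXiv:2601.22611 — 2 statements merged into one kernel-verified Lean document; each statement's English description precedes it below -/
import Mathlib

section
/- Let ū ∈ C¹([0,1]) with ū' bounded, and γ₂ ∈ ℝ. Define A on L²(0,1) with domain D(A) = {ψ ∈ H⁴(0,1) : ψ'(0) = ψ'(1) = 0, ψ'''(0) = ψ'''(1) = 0} by Aψ = −ψ'''' − ū ψ' − γ₂ ψ''. Then A is quasi-dissipative: there exists β > 0 (one can take β = ‖ū'‖_∞/2 + γ₂²/2) such that ⟨Aψ, ψ⟩_{L²} ≤ β ‖ψ‖²_{L²} for all ψ ∈ D(A); more precisely, ⟨Aψ, ψ⟩ ≤ −(1/2)‖ψ''‖²_{L²} + β‖ψ‖²_{L²}. -/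
/-!
Multiplying `Aψ` by `ψ` and integrating, the integrand differs from
`-(ψ'')² + ū' ψ² / 2 - γ₂ ψ'' ψ` by the derivative of `-ψ ψ''' + ψ' ψ'' - ū ψ² / 2`, which vanishes
at both endpoints because of the boundary conditions. The first two terms of the new integrand are
bounded pointwise using `|ū'| ≤ B`, and the cross term by Young's inequality, which absorbs half of
`(ψ'')²`.
-/

open intervalIntegral MeasureTheory

lemma ContDiff.hasDerivAt_iteratedDeriv {n : ℕ} {f : ℝ → ℝ} (hf : ContDiff ℝ n f) {k : ℕ}
    (hk : k < n) (x : ℝ) : HasDerivAt (iteratedDeriv k f) (iteratedDeriv (k + 1) f x) x := by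
  rw [iteratedDeriv_succ]
  exact (hf.differentiable_iteratedDeriv k (by exact_mod_cast hk) x).hasDerivAt

lemma hasDerivAt_energyFlux {ψ u : ℝ → ℝ} (hψ : ContDiff ℝ 4 ψ) (hu : ContDiff ℝ 1 u) (x : ℝ) :
    HasDerivAt
      (fun y ↦ -ψ y * iteratedDeriv 3 ψ y + deriv ψ y * iteratedDeriv 2 ψ y - u y * ψ y ^ 2 / 2)
      (-ψ x * iteratedDeriv 4 ψ x + iteratedDeriv 2 ψ x ^ 2 - deriv u x * ψ x ^ 2 / 2
        - u x * ψ x * deriv ψ x) x := by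
  have h0 := hψ.hasDerivAt_iteratedDeriv (k := 0) (by norm_num) x
  have h1 := hψ.hasDerivAt_iteratedDeriv (k := 1) (by norm_num) x
  have h2 := hψ.hasDerivAt_iteratedDeriv (k := 2) (by norm_num) x
  have h3 := hψ.hasDerivAt_iteratedDeriv (k := 3) (by norm_num) x
  simp only [iteratedDeriv_zero, iteratedDeriv_one, Nat.reduceAdd] at h0 h1 h2 h3
  have hu' := (hu.differentiable one_ne_zero x).hasDerivAt
  refine (((h0.fun_neg.fun_mul h3).fun_add (h1.fun_mul h2)).fun_sub
    ((hu'.fun_mul (h0.fun_pow 2)).div_const 2)).congr_deriv ?_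
  push_cast
  ring

lemma integral_fourthOrder_mul_self {ψ u : ℝ → ℝ} (hψ : ContDiff ℝ 4 ψ) (hu : ContDiff ℝ 1 u)
    {a b : ℝ} (hua : u a = 0) (hub : u b = 0) (hψa : deriv ψ a = 0) (hψb : deriv ψ b = 0)
    (hψ'''a : iteratedDeriv 3 ψ a = 0) (hψ'''b : iteratedDeriv 3 ψ b = 0) (γ : ℝ) :
    (∫ x in a..b, (-(iteratedDeriv 4 ψ x) - u x * deriv ψ x - γ * iteratedDeriv 2 ψ x) * ψ x) =
      ∫ x in a..b, (-(iteratedDeriv 2 ψ x ^ 2) + deriv u x * ψ x ^ 2 / 2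
        - γ * iteratedDeriv 2 ψ x * ψ x) := by
  have hflux := integral_eq_sub_of_hasDerivAt (a := a) (b := b)
    (fun x _ ↦ hasDerivAt_energyFlux hψ hu x)
    (Continuous.intervalIntegrable (by fun_prop (disch := norm_num)) a b)
  rw [← sub_eq_zero, ← integral_sub
    (Continuous.intervalIntegrable (by fun_prop (disch := norm_num)) a b)
    (Continuous.intervalIntegrable (by fun_prop (disch := norm_num)) a b)]
  simp only [hua, hub, hψa, hψb, hψ'''a, hψ'''b] at hflux
  convert hflux using 1
  · congr 1; ext x; ring
  · ring

lemma fourthOrder_energy_density_le {p q d γ B : ℝ} (hd : |d| ≤ B) :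
    -(p ^ 2) + d * q ^ 2 / 2 - γ * p * q ≤ -(1 / 2) * p ^ 2 + (B / 2 + γ ^ 2 / 2) * q ^ 2 := by
  have hdB : d * q ^ 2 ≤ B * q ^ 2 :=
    mul_le_mul_of_nonneg_right ((le_abs_self d).trans hd) (sq_nonneg q)
  nlinarith [sq_nonneg (p + γ * q)]

/-- Quasi-dissipativity of `Aψ = -ψ'''' - ubar ψ' - γ₂ ψ''` with Neumann-type boundary
conditions: `⟨Aψ,ψ⟩ ≤ -(1/2)‖ψ''‖² + β‖ψ‖²` with `β = ‖ubar'‖_∞/2 + γ₂²/2`, and in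
particular `⟨Aψ,ψ⟩ ≤ β‖ψ‖²`. -/
theorem stmt7 (ubar : ℝ → ℝ) (hubar : ContDiff ℝ 1 ubar) (hubar0 : ubar 0 = 0) (hubar1 : ubar 1 = 0)
    (B γ₂ : ℝ) (hB : ∀ x ∈ Set.Icc (0 : ℝ) 1, |deriv ubar x| ≤ B)
    (ψ : ℝ → ℝ) (hψ : ContDiff ℝ 4 ψ)
    (hb1 : deriv ψ 0 = 0) (hb2 : deriv ψ 1 = 0)
    (hb3 : iteratedDeriv 3 ψ 0 = 0) (hb4 : iteratedDeriv 3 ψ 1 = 0) :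
    (∫ x in (0 : ℝ)..1,
        (-(iteratedDeriv 4 ψ x) - ubar x * deriv ψ x - γ₂ * iteratedDeriv 2 ψ x) * ψ x) ≤
      -(1 / 2) * (∫ x in (0 : ℝ)..1, (iteratedDeriv 2 ψ x) ^ 2) +
        (B / 2 + γ₂ ^ 2 / 2) * (∫ x in (0 : ℝ)..1, (ψ x) ^ 2) ∧
    (∫ x in (0 : ℝ)..1,
        (-(iteratedDeriv 4 ψ x) - ubar x * deriv ψ x - γ₂ * iteratedDeriv 2 ψ x) * ψ x) ≤
      (B / 2 + γ₂ ^ 2 / 2) * (∫ x in (0 : ℝ)..1, (ψ x) ^ 2) := by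
  have hψ₂_sq : IntervalIntegrable (fun x ↦ iteratedDeriv 2 ψ x ^ 2) volume 0 1 :=
    Continuous.intervalIntegrable (by fun_prop (disch := norm_num)) 0 1
  have hψ_sq : IntervalIntegrable (fun x ↦ ψ x ^ 2) volume 0 1 :=
    Continuous.intervalIntegrable (by fun_prop) 0 1
  have hbound : (∫ x in (0 : ℝ)..1,
      (-(iteratedDeriv 4 ψ x) - ubar x * deriv ψ x - γ₂ * iteratedDeriv 2 ψ x) * ψ x) ≤
      -(1 / 2) * (∫ x in (0 : ℝ)..1, (iteratedDeriv 2 ψ x) ^ 2) +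
        (B / 2 + γ₂ ^ 2 / 2) * (∫ x in (0 : ℝ)..1, (ψ x) ^ 2) := by
    rw [integral_fourthOrder_mul_self hψ hubar hubar0 hubar1 hb1 hb2 hb3 hb4,
      ← intervalIntegral.integral_const_mul, ← intervalIntegral.integral_const_mul,
      ← intervalIntegral.integral_add (hψ₂_sq.const_mul _) (hψ_sq.const_mul _)]
    refine integral_mono_on zero_le_one
      (Continuous.intervalIntegrable (by fun_prop (disch := norm_num)) 0 1)
      ((hψ₂_sq.const_mul _).add (hψ_sq.const_mul _))
      fun x hx ↦ fourthOrder_energy_density_le (hB x hx)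
  have hψ₂_sq_nonneg : 0 ≤ ∫ x in (0 : ℝ)..1, iteratedDeriv 2 ψ x ^ 2 :=
    integral_nonneg zero_le_one fun x _ ↦ sq_nonneg _
  exact ⟨hbound, hbound.trans (by linarith)⟩
end

section
/- Let ū ∈ C¹([0,1]), γ₂ ∈ ℝ, and set β = ‖ū'‖_∞/2 + γ₂²/2. For λ₀ > β, the bilinear form a(ψ,φ) = λ₀∫₀¹ψφ + ∫₀¹ψ''φ'' + ∫₀¹ū ψ'φ + γ₂∫₀¹ψ''φ on the space H²₁ = {φ ∈ H²(0,1) : φ'(0) = φ'(1) = 0} is continuous and coercive: there exists C > 0 with a(ψ,ψ) ≥ C(‖ψ‖²_{L²} + ‖ψ''‖²_{L²}) for all ψ ∈ H²₁. -/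
/-!
Integrating by parts with `ψ'(0) = ψ'(1) = 0` gives `∫ ψ'² = -∫ ψ''ψ`, so by Cauchy–Schwarz
`‖ψ'‖ ≤ (‖ψ‖ + ‖ψ''‖)/2`; this controls the first-order term and yields continuity. For coercivity,
`ū(0) = ū(1) = 0` turns the transport term into `-½ ∫ ū' ψ² ≥ -(B/2)‖ψ‖²`, and Young's inequality
bounds `γ₂ ∫ ψ''ψ` below by `-(γ₂²/2)‖ψ‖² - ½‖ψ''‖²`, leaving `(λ₀ - β)‖ψ‖² + ½‖ψ''‖²`.
-/

open intervalIntegral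

section Interval

variable {a b : ℝ}

theorem intervalIntegral_sq_nonneg (hab : a ≤ b) (f : ℝ → ℝ) : 0 ≤ ∫ x in a..b, f x ^ 2 :=
  integral_nonneg hab fun x _ => sq_nonneg (f x)

theorem abs_intervalIntegral_mul_le (hab : a ≤ b) {f g : ℝ → ℝ} (hf : Continuous f)
    (hg : Continuous g) :
    |∫ x in a..b, f x * g x| ≤ √(∫ x in a..b, f x ^ 2) * √(∫ x in a..b, g x ^ 2) := by
  set F := ∫ x in a..b, f x ^ 2
  set G := ∫ x in a..b, g x ^ 2
  set I := ∫ x in a..b, f x * g x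
  have hquad : ∀ t : ℝ, 0 ≤ F * (t * t) + (2 * I) * t + G := fun t => by
    have hexpand : ∫ x in a..b, (t * f x + g x) ^ 2 = F * (t * t) + (2 * I) * t + G := by
      have hpt : ∀ x, (t * f x + g x) ^ 2 = (t * t) * f x ^ 2 + (2 * t) * (f x * g x) + g x ^ 2 :=
        fun x => by ring
      simp_rw [hpt]
      rw [integral_add, integral_add, integral_const_mul, integral_const_mul]
      · ring
      all_goals exact Continuous.intervalIntegrable (by fun_prop) _ _
    exact hexpand ▸ intervalIntegral_sq_nonneg hab _
  have hI : I ^ 2 ≤ F * G := by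
    have := discrim_le_zero hquad
    rw [discrim] at this
    nlinarith
  calc |I| = √(I ^ 2) := (Real.sqrt_sq_eq_abs I).symm
    _ ≤ √(F * G) := Real.sqrt_le_sqrt hI
    _ = √F * √G := Real.sqrt_mul (intervalIntegral_sq_nonneg hab f) G

theorem abs_intervalIntegral_mul_mul_le (hab : a ≤ b) {u f g : ℝ → ℝ} {M : ℝ}
    (hu : Continuous u) (hf : Continuous f) (hg : Continuous g)
    (hM : ∀ x ∈ Set.Icc a b, |u x| ≤ M) :
    |∫ x in a..b, u x * f x * g x| ≤ M * √(∫ x in a..b, f x ^ 2) * √(∫ x in a..b, g x ^ 2) := by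
  have hM0 : 0 ≤ M := (abs_nonneg _).trans (hM a (Set.left_mem_Icc.mpr hab))
  have hweighted : ∫ x in a..b, (u x * f x) ^ 2 ≤ M ^ 2 * ∫ x in a..b, f x ^ 2 := by
    rw [← integral_const_mul]
    refine integral_mono_on hab (Continuous.intervalIntegrable (by fun_prop) _ _)
      (Continuous.intervalIntegrable (by fun_prop) _ _) fun x hx => ?_
    rw [mul_pow]
    exact mul_le_mul_of_nonneg_right (sq_le_sq' (abs_le.mp (hM x hx)).1 (abs_le.mp (hM x hx)).2)
      (sq_nonneg _)
  calc |∫ x in a..b, u x * f x * g x|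
      ≤ √(∫ x in a..b, (u x * f x) ^ 2) * √(∫ x in a..b, g x ^ 2) :=
        abs_intervalIntegral_mul_le hab (hu.mul hf) hg
    _ ≤ √(M ^ 2 * ∫ x in a..b, f x ^ 2) * √(∫ x in a..b, g x ^ 2) := by
        gcongr
    _ = M * √(∫ x in a..b, f x ^ 2) * √(∫ x in a..b, g x ^ 2) := by
        rw [Real.sqrt_mul (sq_nonneg M), Real.sqrt_sq hM0]

theorem abs_le_mul_of_abs_deriv_le (hab : a ≤ b) {u : ℝ → ℝ} {B : ℝ} (hu : Differentiable ℝ u)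
    (hua : u a = 0) (hB : ∀ x ∈ Set.Icc a b, |deriv u x| ≤ B) :
    ∀ x ∈ Set.Icc a b, |u x| ≤ B * (b - a) := by
  intro x hx
  have hB0 : 0 ≤ B := (abs_nonneg _).trans (hB a (Set.left_mem_Icc.mpr hab))
  have hmvt := (convex_Icc a b).norm_image_sub_le_of_norm_deriv_le (fun y _ => hu y) hB
    (Set.left_mem_Icc.mpr hab) hx
  rw [hua, sub_zero, Real.norm_eq_abs, Real.norm_eq_abs, abs_of_nonneg (sub_nonneg.mpr hx.1)]
    at hmvt
  exact hmvt.trans (mul_le_mul_of_nonneg_left (by linarith [hx.2]) hB0)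

theorem hasDerivAt_deriv_of_contDiff_two {ψ : ℝ → ℝ} (hψ : ContDiff ℝ 2 ψ) (x : ℝ) :
    HasDerivAt (deriv ψ) (iteratedDeriv 2 ψ x) x := by
  rw [iteratedDeriv_succ, iteratedDeriv_one]
  exact ((hψ.deriv' (n := 1)).differentiable one_ne_zero x).hasDerivAt

theorem intervalIntegral_deriv_sq_eq {ψ : ℝ → ℝ} (hψ : ContDiff ℝ 2 ψ) (ha : deriv ψ a = 0)
    (hb : deriv ψ b = 0) :
    ∫ x in a..b, deriv ψ x ^ 2 = -∫ x in a..b, iteratedDeriv 2 ψ x * ψ x := by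
  have hibp := integral_mul_deriv_eq_deriv_mul
    (fun x _ => hasDerivAt_deriv_of_contDiff_two hψ x)
    (fun x _ => (hψ.differentiable two_ne_zero x).hasDerivAt)
    ((hψ.continuous_iteratedDeriv 2 le_rfl).intervalIntegrable a b)
    ((hψ.continuous_deriv one_le_two).intervalIntegrable a b)
  simp only [ha, hb, zero_mul, sub_zero] at hibp
  simp only [sq, hibp, zero_sub]

theorem sqrt_intervalIntegral_deriv_sq_le (hab : a ≤ b) {ψ : ℝ → ℝ} (hψ : ContDiff ℝ 2 ψ)
    (ha : deriv ψ a = 0) (hb : deriv ψ b = 0) :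
    √(∫ x in a..b, deriv ψ x ^ 2) ≤
      (√(∫ x in a..b, ψ x ^ 2) + √(∫ x in a..b, iteratedDeriv 2 ψ x ^ 2)) / 2 := by
  set s := √(∫ x in a..b, ψ x ^ 2)
  set t := √(∫ x in a..b, iteratedDeriv 2 ψ x ^ 2)
  have hcs : ∫ x in a..b, deriv ψ x ^ 2 ≤ t * s := by
    rw [intervalIntegral_deriv_sq_eq hψ ha hb]
    exact (neg_le_abs _).trans <|
      abs_intervalIntegral_mul_le hab (hψ.continuous_iteratedDeriv 2 le_rfl) hψ.continuous
  rw [Real.sqrt_le_iff]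
  constructor
  · positivity
  · nlinarith [sq_nonneg (s - t)]

theorem intervalIntegral_mul_deriv_mul_self_eq {u ψ : ℝ → ℝ} (hu : ContDiff ℝ 1 u)
    (hψ : ContDiff ℝ 1 ψ) (hua : u a = 0) (hub : u b = 0) :
    ∫ x in a..b, u x * deriv ψ x * ψ x = -(1 / 2) * ∫ x in a..b, deriv u x * ψ x ^ 2 := by
  have hibp := integral_mul_deriv_eq_deriv_mul (v := fun x => ψ x ^ 2)
    (fun x _ => (hu.differentiable one_ne_zero x).hasDerivAt)
    (fun x _ => ((hψ.differentiable one_ne_zero x).hasDerivAt).pow 2)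
    ((hu.continuous_deriv le_rfl).intervalIntegrable a b)
    (Continuous.intervalIntegrable (by fun_prop) a b)
  simp only [hua, hub, zero_mul, sub_zero, zero_sub, Nat.cast_ofNat, Nat.reduceSub, pow_one]
    at hibp
  have htwice : ∫ x in a..b, u x * (2 * ψ x * deriv ψ x)
      = 2 * ∫ x in a..b, u x * deriv ψ x * ψ x := by
    rw [← integral_const_mul]
    congr 1 with x
    ring
  linarith

theorem neg_mul_le_intervalIntegral_mul_deriv_mul_self (hab : a ≤ b) {u ψ : ℝ → ℝ} {B : ℝ}
    (hu : ContDiff ℝ 1 u) (hψ : ContDiff ℝ 1 ψ) (hua : u a = 0) (hub : u b = 0)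
    (hB : ∀ x ∈ Set.Icc a b, deriv u x ≤ B) :
    -(B / 2) * ∫ x in a..b, ψ x ^ 2 ≤ ∫ x in a..b, u x * deriv ψ x * ψ x := by
  have hbound : ∫ x in a..b, deriv u x * ψ x ^ 2 ≤ B * ∫ x in a..b, ψ x ^ 2 := by
    rw [← integral_const_mul]
    exact integral_mono_on hab (Continuous.intervalIntegrable (by fun_prop) _ _)
      (Continuous.intervalIntegrable (by fun_prop) _ _)
      fun x hx => mul_le_mul_of_nonneg_right (hB x hx) (sq_nonneg _)
  rw [intervalIntegral_mul_deriv_mul_self_eq hu hψ hua hub]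
  linarith

end Interval

noncomputable def bilinForm (lam0 γ₂ : ℝ) (ubar ψ φ : ℝ → ℝ) : ℝ :=
  lam0 * (∫ x in (0 : ℝ)..1, ψ x * φ x) +
    (∫ x in (0 : ℝ)..1, iteratedDeriv 2 ψ x * iteratedDeriv 2 φ x) +
    (∫ x in (0 : ℝ)..1, ubar x * deriv ψ x * φ x) +
    γ₂ * (∫ x in (0 : ℝ)..1, iteratedDeriv 2 ψ x * φ x)

noncomputable def h2Norm (ψ : ℝ → ℝ) : ℝ :=
  √(∫ x in (0 : ℝ)..1, ψ x ^ 2) + √(∫ x in (0 : ℝ)..1, iteratedDeriv 2 ψ x ^ 2)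

theorem h2Norm_nonneg (ψ : ℝ → ℝ) : 0 ≤ h2Norm ψ := by
  unfold h2Norm
  positivity

theorem sqrt_intervalIntegral_sq_le_h2Norm (ψ : ℝ → ℝ) : √(∫ x in (0 : ℝ)..1, ψ x ^ 2) ≤ h2Norm ψ :=
  le_add_of_nonneg_right (Real.sqrt_nonneg _)

theorem sqrt_intervalIntegral_iteratedDeriv_sq_le_h2Norm (ψ : ℝ → ℝ) :
    √(∫ x in (0 : ℝ)..1, iteratedDeriv 2 ψ x ^ 2) ≤ h2Norm ψ :=
  le_add_of_nonneg_left (Real.sqrt_nonneg _)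

theorem abs_bilinForm_le {lam0 γ₂ M : ℝ} {ubar ψ φ : ℝ → ℝ} (hubar : Continuous ubar)
    (hM : ∀ x ∈ Set.Icc (0 : ℝ) 1, |ubar x| ≤ M) (hψ : ContDiff ℝ 2 ψ) (hφ : ContDiff ℝ 2 φ)
    (hψ0 : deriv ψ 0 = 0) (hψ1 : deriv ψ 1 = 0) :
    |bilinForm lam0 γ₂ ubar ψ φ| ≤ (|lam0| + 1 + M + |γ₂|) * h2Norm ψ * h2Norm φ := by
  have hM0 : 0 ≤ M := (abs_nonneg _).trans (hM 0 (by norm_num))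
  have hψ'' := hψ.continuous_iteratedDeriv 2 le_rfl
  have hφ'' := hφ.continuous_iteratedDeriv 2 le_rfl
  set N := h2Norm ψ * h2Norm φ
  have hprod {s t : ℝ} (hs : s ≤ h2Norm ψ) (ht : t ≤ h2Norm φ) (ht0 : 0 ≤ t) : s * t ≤ N :=
    mul_le_mul hs ht ht0 (h2Norm_nonneg ψ)
  have h₁ : |∫ x in (0 : ℝ)..1, ψ x * φ x| ≤ N :=
    (abs_intervalIntegral_mul_le zero_le_one hψ.continuous hφ.continuous).trans <|
      hprod (sqrt_intervalIntegral_sq_le_h2Norm ψ) (sqrt_intervalIntegral_sq_le_h2Norm φ)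
        (Real.sqrt_nonneg _)
  have h₂ : |∫ x in (0 : ℝ)..1, iteratedDeriv 2 ψ x * iteratedDeriv 2 φ x| ≤ N :=
    (abs_intervalIntegral_mul_le zero_le_one hψ'' hφ'').trans <|
      hprod (sqrt_intervalIntegral_iteratedDeriv_sq_le_h2Norm ψ)
        (sqrt_intervalIntegral_iteratedDeriv_sq_le_h2Norm φ) (Real.sqrt_nonneg _)
  have h₃ : |∫ x in (0 : ℝ)..1, ubar x * deriv ψ x * φ x| ≤ M * N := by
    have hψ' : √(∫ x in (0 : ℝ)..1, deriv ψ x ^ 2) ≤ h2Norm ψ :=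
      (sqrt_intervalIntegral_deriv_sq_le zero_le_one hψ hψ0 hψ1).trans <|
        half_le_self (h2Norm_nonneg ψ)
    calc _ ≤ M * √(∫ x in (0 : ℝ)..1, deriv ψ x ^ 2) * √(∫ x in (0 : ℝ)..1, φ x ^ 2) :=
          abs_intervalIntegral_mul_mul_le zero_le_one hubar (hψ.continuous_deriv one_le_two)
            hφ.continuous hM
      _ ≤ M * N := by
          rw [mul_assoc]
          exact mul_le_mul_of_nonneg_left (hprod hψ' (sqrt_intervalIntegral_sq_le_h2Norm φ)
            (Real.sqrt_nonneg _)) hM0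
  have h₄ : |∫ x in (0 : ℝ)..1, iteratedDeriv 2 ψ x * φ x| ≤ N :=
    (abs_intervalIntegral_mul_le zero_le_one hψ'' hφ.continuous).trans <|
      hprod (sqrt_intervalIntegral_iteratedDeriv_sq_le_h2Norm ψ)
        (sqrt_intervalIntegral_sq_le_h2Norm φ) (Real.sqrt_nonneg _)
  unfold bilinForm
  calc _ ≤ |lam0| * |∫ x in (0 : ℝ)..1, ψ x * φ x|
          + |∫ x in (0 : ℝ)..1, iteratedDeriv 2 ψ x * iteratedDeriv 2 φ x|
          + |∫ x in (0 : ℝ)..1, ubar x * deriv ψ x * φ x|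
          + |γ₂| * |∫ x in (0 : ℝ)..1, iteratedDeriv 2 ψ x * φ x| := by
        rw [← abs_mul, ← abs_mul]
        exact (abs_add_le _ _).trans (by gcongr; exact abs_add_three _ _ _)
    _ ≤ |lam0| * N + N + M * N + |γ₂| * N := by
        gcongr
    _ = (|lam0| + 1 + M + |γ₂|) * h2Norm ψ * h2Norm φ := by ring

theorem bilinForm_self_ge {lam0 γ₂ B : ℝ} {ubar ψ : ℝ → ℝ} (hubar : ContDiff ℝ 1 ubar)
    (hubar0 : ubar 0 = 0) (hubar1 : ubar 1 = 0)
    (hB : ∀ x ∈ Set.Icc (0 : ℝ) 1, deriv ubar x ≤ B) (hψ : ContDiff ℝ 2 ψ) :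
    (lam0 - (B / 2 + γ₂ ^ 2 / 2)) * (∫ x in (0 : ℝ)..1, ψ x ^ 2) +
        (1 / 2) * ∫ x in (0 : ℝ)..1, iteratedDeriv 2 ψ x ^ 2 ≤
      bilinForm lam0 γ₂ ubar ψ ψ := by
  set A := ∫ x in (0 : ℝ)..1, ψ x ^ 2
  set D := ∫ x in (0 : ℝ)..1, iteratedDeriv 2 ψ x ^ 2
  have hA : √A ^ 2 = A := Real.sq_sqrt (intervalIntegral_sq_nonneg zero_le_one ψ)
  have hD : √D ^ 2 = D := Real.sq_sqrt (intervalIntegral_sq_nonneg zero_le_one _)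
  have htransport := neg_mul_le_intervalIntegral_mul_deriv_mul_self zero_le_one hubar
    (hψ.of_le one_le_two) hubar0 hubar1 hB
  have hcs := abs_intervalIntegral_mul_le zero_le_one
    (hψ.continuous_iteratedDeriv 2 le_rfl) hψ.continuous
  have hyoung : -(γ₂ ^ 2 / 2 * A + D / 2) ≤ γ₂ * ∫ x in (0 : ℝ)..1, iteratedDeriv 2 ψ x * ψ x := by
    have := mul_le_mul_of_nonneg_left hcs (abs_nonneg γ₂)
    rw [← abs_mul] at this
    nlinarith [neg_abs_le (γ₂ * ∫ x in (0 : ℝ)..1, iteratedDeriv 2 ψ x * ψ x),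
      sq_nonneg (|γ₂| * √A - √D), sq_abs γ₂]
  simp only [bilinForm, ← sq]
  linarith
/-- Continuity and coercivity of the bilinear form
`a(ψ,φ) = lam0∫ψφ + ∫ψ''φ'' + ∫ubar ψ'φ + γ₂∫ψ''φ` on
`H²₁ = {φ ∈ H²(0,1) : φ'(0) = φ'(1) = 0}`, for `lam0 > β = ‖ubar'‖_∞/2 + γ₂²/2`. -/
theorem stmt8 (ubar : ℝ → ℝ) (hubar : ContDiff ℝ 1 ubar) (hubar0 : ubar 0 = 0) (hubar1 : ubar 1 = 0)
    (B γ₂ lam0 : ℝ) (hB : ∀ x ∈ Set.Icc (0 : ℝ) 1, |deriv ubar x| ≤ B)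
    (hlam : B / 2 + γ₂ ^ 2 / 2 < lam0) :
    (∃ C' : ℝ, 0 < C' ∧ ∀ ψ φ : ℝ → ℝ, ContDiff ℝ 2 ψ → ContDiff ℝ 2 φ →
      deriv ψ 0 = 0 → deriv ψ 1 = 0 → deriv φ 0 = 0 → deriv φ 1 = 0 →
      |lam0 * (∫ x in (0 : ℝ)..1, ψ x * φ x) +
          (∫ x in (0 : ℝ)..1, iteratedDeriv 2 ψ x * iteratedDeriv 2 φ x) +
          (∫ x in (0 : ℝ)..1, ubar x * deriv ψ x * φ x) +
          γ₂ * (∫ x in (0 : ℝ)..1, iteratedDeriv 2 ψ x * φ x)| ≤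
        C' * (Real.sqrt (∫ x in (0 : ℝ)..1, (ψ x) ^ 2) +
              Real.sqrt (∫ x in (0 : ℝ)..1, (iteratedDeriv 2 ψ x) ^ 2)) *
             (Real.sqrt (∫ x in (0 : ℝ)..1, (φ x) ^ 2) +
              Real.sqrt (∫ x in (0 : ℝ)..1, (iteratedDeriv 2 φ x) ^ 2))) ∧
    (∃ C : ℝ, 0 < C ∧ ∀ ψ : ℝ → ℝ, ContDiff ℝ 2 ψ →
      deriv ψ 0 = 0 → deriv ψ 1 = 0 →
      C * ((∫ x in (0 : ℝ)..1, (ψ x) ^ 2) +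
           (∫ x in (0 : ℝ)..1, (iteratedDeriv 2 ψ x) ^ 2)) ≤
        lam0 * (∫ x in (0 : ℝ)..1, (ψ x) ^ 2) +
          (∫ x in (0 : ℝ)..1, (iteratedDeriv 2 ψ x) ^ 2) +
          (∫ x in (0 : ℝ)..1, ubar x * deriv ψ x * ψ x) +
          γ₂ * (∫ x in (0 : ℝ)..1, iteratedDeriv 2 ψ x * ψ x)) := by
  have hubarM : ∀ x ∈ Set.Icc (0 : ℝ) 1, |ubar x| ≤ B := by
    simpa using abs_le_mul_of_abs_deriv_le zero_le_one (hubar.differentiable one_ne_zero)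
      hubar0 hB
  have hB0 : 0 ≤ B := (abs_nonneg _).trans (hB 0 (by norm_num))
  refine ⟨⟨|lam0| + 1 + B + |γ₂|, by positivity, fun ψ φ hψ hφ hψ0 hψ1 _ _ =>
    abs_bilinForm_le hubar.continuous hubarM hψ hφ hψ0 hψ1⟩,
    ⟨min (lam0 - (B / 2 + γ₂ ^ 2 / 2)) (1 / 2), lt_min (by linarith) one_half_pos,
      fun ψ hψ _ _ => ?_⟩⟩
  have hcoercive := bilinForm_self_ge (lam0 := lam0) (γ₂ := γ₂) hubar hubar0 hubar1
    (fun x hx => (abs_le.mp (hB x hx)).2) hψ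
  simp only [bilinForm, ← sq] at hcoercive
  have hA := intervalIntegral_sq_nonneg zero_le_one ψ
  have hD := intervalIntegral_sq_nonneg zero_le_one (iteratedDeriv 2 ψ)
  linarith [mul_le_mul_of_nonneg_right (min_le_left (lam0 - (B / 2 + γ₂ ^ 2 / 2)) (1 / 2)) hA,
    mul_le_mul_of_nonneg_right (min_le_right (lam0 - (B / 2 + γ₂ ^ 2 / 2)) (1 / 2)) hD]
end
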